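/- arXiv:1506.05344 — 2 statements merged into one kernel-verified Lean document; each statement's English description precedes it below -/
import Mathlib

section
/- As an identity of formal power series in q, (q^2;q^2)_∞ / (q;q^2)_∞ = Σ_{n=0}^∞ q^{n(n+1)/2} (Gauss's identity). -/
/-!
The finite form of Jacobi's triple product at `z = 1`,
`∑_{j ∈ ℤ} [2n, n + j]_q q^{j(j+1)/2} = (-1; q)_n (-q; q)_n`,
follows by induction on `n` from the two `q`-Pascal rules. Modulo `q^D` and for `n ≥ 2D`, every
Gaussian binomial meeting a term of degree `< D` is inverse to `(q; q)_D`, and pairing `j` with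
`-1 - j` turns the left side into `2 [2n, n]_q ψ`, where `ψ = ∑_k q^{k(k+1)/2}`. Cancelling `2`
gives `ψ ≡ (-q; q)_n² (q; q)_n = (-q; q)_n (q²; q²)_n`, and `(q²; q²)_n (q; q²)_n = (q; q)_{2n}`
then yields `ψ (q; q²)_n ≡ (q²; q²)_n`; both finite products agree with the infinite ones
modulo `q^D`.
-/

open PowerSeries Finset

/-- The infinite product `∏_{i=0}^∞ f i` of formal power series, defined coefficientwise. -/
noncomputable def prodInf {K : Type*} [CommRing K] (f : ℕ → PowerSeries K) : PowerSeries K :=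
  PowerSeries.mk fun d => PowerSeries.coeff d (∏ i ∈ Finset.range (d + 1), f i)

/-- The theta-like series `Σ_{n=0}^∞ q^{n(n+1)/2}`: the coefficient of `q^d` is `1` if `d`
is a triangular number, and `0` otherwise (triangular numbers are pairwise distinct). -/
noncomputable def triangularSeries : PowerSeries ℚ := open scoped Classical in
  PowerSeries.mk fun d => if ∃ n ∈ Finset.range (d + 1), n * (n + 1) / 2 = d then 1 else 0

section QAnalogues

variable {R : Type*} [CommRing R]

def qPochhammer (a x : R) (n : ℕ) : R := ∏ i ∈ range n, (1 - a * x ^ i)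

variable (x : R)

/-- The Gaussian binomial coefficient `[m, k]_x`, extended by zero to all integers `k`. -/
def qBinom : ℕ → ℤ → R
  | 0, k => if k = 0 then 1 else 0
  | m + 1, k => qBinom m (k - 1) + x ^ k.toNat * qBinom m k

theorem qBinom_succ (m : ℕ) (k : ℤ) :
    qBinom x (m + 1) k = qBinom x m (k - 1) + x ^ k.toNat * qBinom x m k := rfl

theorem qBinom_eq_zero {m : ℕ} {k : ℤ} (hk : k < 0 ∨ m < k) : qBinom x m k = 0 := by
  induction m generalizing k with
  | zero => simp only [qBinom]; exact if_neg (by omega)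
  | succ m ih => rw [qBinom_succ, ih (by omega), ih (by omega), mul_zero, add_zero]

theorem qBinom_zero_right (m : ℕ) : qBinom x m 0 = 1 := by
  induction m with
  | zero => rfl
  | succ m ih => rw [qBinom_succ, ih, qBinom_eq_zero x (by omega)]; simp

theorem pow_mul_qBinom_congr {a b m : ℕ} {k : ℤ} (h : 0 ≤ k → k ≤ m → a = b) :
    x ^ a * qBinom x m k = x ^ b * qBinom x m k := by
  by_cases hk : 0 ≤ k ∧ k ≤ m
  · rw [h hk.1 hk.2]
  · rw [qBinom_eq_zero x (by omega), mul_zero, mul_zero]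

theorem qBinom_succ' (m : ℕ) (k : ℤ) :
    qBinom x (m + 1) k = x ^ (m + 1 - k).toNat * qBinom x m (k - 1) + qBinom x m k := by
  induction m generalizing k with
  | zero =>
    have h₁ := pow_mul_qBinom_congr x (a := k.toNat) (b := 0) (m := 0) (k := k) (by omega)
    have h₂ := pow_mul_qBinom_congr x (a := (1 - k).toNat) (b := 0) (m := 0) (k := k - 1)
      (by omega)
    rw [qBinom_succ]
    push_cast
    linear_combination h₁ - h₂
  | succ m ih =>
    have h := pow_mul_qBinom_congr x (a := k.toNat + (m + 1 - k).toNat)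
      (b := (m + 1 + 1 - k).toNat + (k - 1).toNat) (m := m) (k := k - 1) (by omega)
    have e : ((m : ℤ) + 1 - (k - 1)).toNat = ((m : ℤ) + 1 + 1 - k).toNat := by omega
    rw [qBinom_succ x (m + 1)]
    conv_lhs => rw [ih, ih]
    rw [qBinom_succ x m (k - 1), qBinom_succ x m k, e]
    push_cast
    linear_combination h

theorem qBinom_add_two (m : ℕ) (k : ℤ) :
    qBinom x (m + 2) k = x ^ k.toNat * qBinom x m k + (1 + x ^ (m + 1)) * qBinom x m (k - 1)
      + x ^ (m + 2 - k).toNat * qBinom x m (k - 2) := by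
  have h := pow_mul_qBinom_congr x (a := (m + 2 - k).toNat + (k - 1).toNat) (b := m + 1)
    (m := m) (k := k - 1) (by omega)
  rw [qBinom_succ' x (m + 1), qBinom_succ x m (k - 1), qBinom_succ x m k, sub_sub]
  push_cast
  rw [show (m : ℤ) + 1 + 1 - k = m + 2 - k by ring]
  linear_combination h

theorem qBinom_mul_qPochhammer (m k : ℕ) :
    qBinom x m k * qPochhammer x x k = ∏ i ∈ range k, (1 - x ^ (m - i)) := by
  induction m generalizing k with
  | zero =>
    cases k with
    | zero => simp [qBinom, qPochhammer]
    | succ k => rw [qBinom_eq_zero x (by omega), zero_mul, prod_range_succ']; simp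
  | succ m ih =>
    cases k with
    | zero => simp [qBinom_zero_right, qPochhammer]
    | succ k =>
      have hP : (∏ i ∈ range k, (1 - x ^ (m - i))) * x ^ (k + 1) * x ^ (m - k)
          = (∏ i ∈ range k, (1 - x ^ (m - i))) * x ^ (m + 1) := by
        rcases le_or_gt k m with hkm | hkm
        · rw [mul_assoc, ← pow_add, show k + 1 + (m - k) = m + 1 by omega]
        · rw [prod_eq_zero (mem_range.2 hkm) (by simp)]; simp
      have hQ : qPochhammer x x (k + 1) = qPochhammer x x k * (1 - x * x ^ k) :=
        prod_range_succ _ _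
      have h₁ := ih k
      have h₂ := ih (k + 1)
      rw [prod_range_succ] at h₂
      rw [qBinom_succ, show ((k + 1 : ℕ) : ℤ) - 1 = k by push_cast; ring, Int.toNat_natCast,
        prod_range_succ']
      simp only [Nat.add_sub_add_right, Nat.sub_zero]
      linear_combination qBinom x m k * hQ + (1 - x * x ^ k) * h₁ + x ^ (k + 1) * h₂ - hP

theorem qPochhammer_neg_one_succ (n : ℕ) :
    qPochhammer (-1) x (n + 1) = 2 * qPochhammer (-x) x n := by
  rw [qPochhammer, prod_range_succ', qPochhammer, mul_comm]
  congr 1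
  · norm_num
  · exact prod_congr rfl fun i _ => by ring

theorem qPochhammer_mul_qPochhammer_neg (n : ℕ) :
    qPochhammer x x n * qPochhammer (-x) x n = qPochhammer (x ^ 2) (x ^ 2) n := by
  rw [qPochhammer, qPochhammer, qPochhammer, ← prod_mul_distrib]
  exact prod_congr rfl fun i _ => by ring

theorem qPochhammer_sq_mul_qPochhammer (n : ℕ) :
    qPochhammer (x ^ 2) (x ^ 2) n * qPochhammer x (x ^ 2) n = qPochhammer x x (2 * n) := by
  induction n with
  | zero => simp [qPochhammer]
  | succ n ih =>
    rw [show 2 * (n + 1) = 2 * n + 1 + 1 by ring]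
    simp only [qPochhammer, prod_range_succ] at ih ⊢
    rw [← ih]
    ring

end QAnalogues

def triangular (j : ℤ) : ℕ := (j * (j + 1) / 2).toNat

theorem natCast_triangular (j : ℤ) : (triangular j : ℤ) = j * (j + 1) / 2 :=
  Int.toNat_of_nonneg (Int.ediv_nonneg (by rcases le_or_gt 0 j with h | h <;> nlinarith)
    (by norm_num))

theorem triangular_add_one (j : ℤ) : (triangular (j + 1) : ℤ) = triangular j + (j + 1) := by
  rw [natCast_triangular, natCast_triangular, ← Int.add_mul_ediv_left _ _ two_ne_zero]
  ring_nf

theorem triangular_neg_add_one (i : ℤ) : triangular (-(i + 1)) = triangular i := by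
  rw [triangular, triangular]
  ring_nf

theorem triangular_natCast (i : ℕ) : triangular i = i * (i + 1) / 2 := by
  rw [triangular, ← Int.toNat_natCast (i * (i + 1) / 2)]
  push_cast
  rfl

theorem strictMono_triangular_natCast : StrictMono fun i : ℕ => triangular i := by
  refine strictMono_nat_of_lt_succ fun i => ?_
  have := triangular_add_one i
  rw [Nat.cast_succ]
  omega

section FiniteTheta

variable {R : Type*} [CommRing R] (x : R)

noncomputable def finiteTheta (n : ℕ) : R :=
  ∑ᶠ j : ℤ, qBinom x (2 * n) (n + j) * x ^ triangular j

theorem hasFiniteSupport_qBinom_mul (m : ℕ) (c : ℤ) (g : ℤ → R) :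
    Function.HasFiniteSupport fun j => qBinom x m (c + j) * g j := by
  refine (Set.finite_Icc (-c) (m - c)).subset fun j hj => Set.mem_Icc.2 ?_
  by_contra h
  apply Function.mem_support.1 hj
  rw [qBinom_eq_zero x (by omega), zero_mul]

theorem qBinom_add_two_mul_pow_triangular (n : ℕ) (j : ℤ) :
    qBinom x (2 * n + 2) (n + 1 + j) * x ^ triangular j
      = x ^ n * (qBinom x (2 * n) (n + (j + 1)) * x ^ triangular (j + 1))
        + (1 + x ^ (2 * n + 1)) * (qBinom x (2 * n) (n + j) * x ^ triangular j)
        + x ^ (n + 1) * (qBinom x (2 * n) (n + (j + -1)) * x ^ triangular (j + -1)) := by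
  have h₁ := triangular_add_one j
  have h₂ := triangular_add_one (j - 1)
  rw [sub_add_cancel] at h₂
  have e₁ := pow_mul_qBinom_congr x (m := 2 * n) (k := n + 1 + j)
    (a := (n + 1 + j).toNat + triangular j) (b := n + triangular (j + 1)) (by omega)
  have e₂ := pow_mul_qBinom_congr x (m := 2 * n) (k := n + j - 1)
    (a := (2 * n + 2 - (n + 1 + j)).toNat + triangular j) (b := n + 1 + triangular (j - 1))
    (by omega)
  simp only [pow_add] at e₁ e₂ ⊢
  rw [qBinom_add_two]
  push_cast
  rw [show (n : ℤ) + 1 + j - 1 = n + j by ring, show (n : ℤ) + 1 + j - 2 = n + (j + -1) by ring,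
    show (n : ℤ) + (j + 1) = n + 1 + j by ring, ← sub_eq_add_neg,
    show (n : ℤ) + (j - 1) = n + j - 1 by ring]
  linear_combination e₁ + e₂

theorem finiteTheta_succ (n : ℕ) :
    finiteTheta x (n + 1) = (1 + x ^ n) * (1 + x ^ (n + 1)) * finiteTheta x n := by
  set f : ℤ → R := fun j => qBinom x (2 * n) (n + j) * x ^ triangular j
  have hf : Function.HasFiniteSupport f := hasFiniteSupport_qBinom_mul x _ _ _
  have hshift (c : ℤ) : Function.HasFiniteSupport fun j => f (j + c) :=
    hf.comp_of_injective (add_left_injective c)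
  have hterm (j : ℤ) : qBinom x (2 * (n + 1)) ((n + 1 : ℕ) + j) * x ^ triangular j
      = x ^ n * f (j + 1) + (1 + x ^ (2 * n + 1)) * f j + x ^ (n + 1) * f (j + -1) := by
    rw [show 2 * (n + 1) = 2 * n + 2 by ring]
    push_cast
    exact qBinom_add_two_mul_pow_triangular x n j
  have hsum (c : ℤ) : ∑ᶠ j, f (j + c) = ∑ᶠ j, f j := finsum_comp_equiv (Equiv.addRight c)
  have hf_succ : Function.HasFiniteSupport fun j => x ^ n * f (j + 1) :=
    (hshift 1).mul_right _
  have hf_mid : Function.HasFiniteSupport fun j => (1 + x ^ (2 * n + 1)) * f j := hf.mul_right _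
  have hf_pred : Function.HasFiniteSupport fun j => x ^ (n + 1) * f (j + -1) :=
    (hshift (-1)).mul_right _
  calc finiteTheta x (n + 1)
      = ∑ᶠ j, (x ^ n * f (j + 1) + (1 + x ^ (2 * n + 1)) * f j + x ^ (n + 1) * f (j + -1)) :=
        finsum_congr hterm
    _ = x ^ n * ∑ᶠ j, f (j + 1) + (1 + x ^ (2 * n + 1)) * ∑ᶠ j, f j
          + x ^ (n + 1) * ∑ᶠ j, f (j + -1) := by
        have hf_sm : Function.HasFiniteSupport
            fun j => x ^ n * f (j + 1) + (1 + x ^ (2 * n + 1)) * f j := hf_succ.add hf_mid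
        rw [finsum_add_distrib hf_sm hf_pred, finsum_add_distrib hf_succ hf_mid,
          mul_finsum' _ _ (hshift 1), mul_finsum' _ _ hf, mul_finsum' _ _ (hshift (-1))]
    _ = (1 + x ^ n) * (1 + x ^ (n + 1)) * finiteTheta x n := by
        rw [hsum, hsum]
        simp only [finiteTheta, f]
        ring

theorem finiteTheta_eq (n : ℕ) :
    finiteTheta x n = qPochhammer (-1) x n * qPochhammer (-x) x n := by
  induction n with
  | zero =>
    rw [finiteTheta, finsum_eq_single _ 0 fun j hj => by
      rw [qBinom_eq_zero x (by omega), zero_mul]]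
    simp [qPochhammer, qBinom, triangular]
  | succ n ih =>
    rw [finiteTheta_succ, ih]
    simp only [qPochhammer, prod_range_succ]
    ring

theorem finsum_int_eq_sum_range {M : Type*} [AddCommMonoid M] {f : ℤ → M} {N : ℕ}
    (hf : Function.support f ⊆ Set.Ico (-N : ℤ) N) :
    ∑ᶠ j, f j = ∑ i ∈ range N, (f i + f (-(i + 1))) := by
  rw [finsum_eq_sum_of_support_subset f (s := Finset.Ico (-N : ℤ) N) (by simpa using hf)]
  clear hf
  induction N with
  | zero => simp
  | succ N ih =>
    rw [Nat.cast_succ, ← Finset.insert_Ico_right_eq_Ico_add_one (by omega),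
      neg_add, ← sub_eq_add_neg, ← Finset.insert_Ico_left_eq_Ico_sub_one (by omega),
      sum_insert (by simp; omega), sum_insert (by simp), ih, sum_range_succ,
      show -(N : ℤ) - 1 = -(N + 1) by ring]
    abel

theorem finiteTheta_eq_sum_range (n : ℕ) :
    finiteTheta x n = ∑ i ∈ range (n + 1),
      (qBinom x (2 * n) (n + i) + qBinom x (2 * n) (n - (i + 1))) * x ^ triangular i := by
  rw [finiteTheta, finsum_int_eq_sum_range]
  · refine sum_congr rfl fun i _ => ?_
    rw [triangular_neg_add_one, ← sub_eq_add_neg, add_mul]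
  · intro j hj
    by_contra h
    apply Function.mem_support.1 hj
    rw [qBinom_eq_zero x (by push_cast at h ⊢; rw [Set.mem_Ico] at h; omega), zero_mul]

end FiniteTheta

section ModXPow

variable {K : Type*} [CommRing K]

noncomputable abbrev modXPow (D : ℕ) : K⟦X⟧ →+* K⟦X⟧ ⧸ Ideal.span {(X : K⟦X⟧) ^ D} :=
  Ideal.Quotient.mk _

variable {D : ℕ}

theorem modXPow_X_pow {k : ℕ} (h : D ≤ k) : modXPow D (X ^ k : K⟦X⟧) = 0 :=
  Ideal.Quotient.eq_zero_iff_mem.2 (Ideal.mem_span_singleton.2 (pow_dvd_pow X h))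

theorem modXPow_eq_modXPow_iff {f g : K⟦X⟧} :
    modXPow D f = modXPow D g ↔ ∀ d < D, coeff d f = coeff d g := by
  simp only [modXPow, Ideal.Quotient.eq, Ideal.mem_span_singleton, X_pow_dvd_iff, map_sub,
    sub_eq_zero]

theorem modXPow_prod_range {f : ℕ → K⟦X⟧} (hf : ∀ i, X ^ (i + 1) ∣ f i - 1) {n : ℕ}
    (hn : D ≤ n) : modXPow D (∏ i ∈ range n, f i) = modXPow D (∏ i ∈ range D, f i) := by
  have htail : modXPow D (∏ i ∈ Ico D n, f i) = 1 := by
    rw [map_prod]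
    refine prod_eq_one fun i hi => ?_
    rw [← map_one (modXPow D), Ideal.Quotient.eq, Ideal.mem_span_singleton]
    exact (pow_dvd_pow X (by simp at hi; omega)).trans (hf i)
  rw [← prod_range_mul_prod_Ico f hn, map_mul, htail, mul_one]

theorem modXPow_prodInf {f : ℕ → K⟦X⟧} (hf : ∀ i, X ^ (i + 1) ∣ f i - 1) {n : ℕ} (hn : D ≤ n) :
    modXPow D (prodInf f) = modXPow D (∏ i ∈ range n, f i) := by
  refine modXPow_eq_modXPow_iff.2 fun d hd => ?_
  rw [prodInf, coeff_mk]
  exact (modXPow_eq_modXPow_iff.1 (modXPow_prod_range hf (show d + 1 ≤ n by omega)) d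
    (lt_add_one d)).symm

theorem X_pow_succ_dvd_one_sub_mul_pow_sub_one {a x : K⟦X⟧} (ha : X ∣ a) (hx : X ∣ x) (i : ℕ) :
    X ^ (i + 1) ∣ 1 - a * x ^ i - 1 := by
  rw [sub_sub_cancel_left, dvd_neg, pow_succ']
  exact mul_dvd_mul ha (pow_dvd_pow_of_dvd hx i)

theorem modXPow_qPochhammer {a x : K⟦X⟧} (ha : X ∣ a) (hx : X ∣ x) {n : ℕ} (hn : D ≤ n) :
    modXPow D (qPochhammer a x n) = modXPow D (qPochhammer a x D) :=
  modXPow_prod_range (X_pow_succ_dvd_one_sub_mul_pow_sub_one ha hx) hn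

theorem modXPow_prodInf_eq_qPochhammer {a x : K⟦X⟧} (ha : X ∣ a) (hx : X ∣ x) {n : ℕ}
    (hn : D ≤ n) :
    modXPow D (prodInf fun i => 1 - a * x ^ i) = modXPow D (qPochhammer a x n) :=
  modXPow_prodInf (X_pow_succ_dvd_one_sub_mul_pow_sub_one ha hx) hn

theorem modXPow_qBinom_mul_qPochhammer {m k : ℕ} (hk : D ≤ k) (hkm : k + D ≤ m) :
    modXPow D (qBinom X m k) * modXPow D (qPochhammer (X : K⟦X⟧) X D) = 1 := by
  rw [← modXPow_qPochhammer dvd_rfl dvd_rfl hk, ← map_mul, qBinom_mul_qPochhammer, map_prod]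
  refine prod_eq_one fun i hi => ?_
  rw [map_sub, map_one, modXPow_X_pow (by simp at hi; omega), sub_zero]

theorem modXPow_qBinom_eq {m : ℕ} {k l : ℤ} (hk : D ≤ k) (hkm : k + D ≤ m) (hl : D ≤ l)
    (hlm : l + D ≤ m) : modXPow D (qBinom (X : K⟦X⟧) m k) = modXPow D (qBinom X m l) := by
  lift k to ℕ using (by omega)
  lift l to ℕ using (by omega)
  exact left_inv_eq_right_inv (modXPow_qBinom_mul_qPochhammer (by omega) (by omega))
    ((mul_comm _ _).trans (modXPow_qBinom_mul_qPochhammer (by omega) (by omega)))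

theorem modXPow_finiteTheta {n : ℕ} (hn : 2 * D ≤ n) :
    modXPow D (finiteTheta X n) = 2 * modXPow D (qBinom (X : K⟦X⟧) (2 * n) n)
      * modXPow D (∑ i ∈ range (n + 1), X ^ triangular i) := by
  rw [finiteTheta_eq_sum_range, map_sum, map_sum, mul_sum]
  refine sum_congr rfl fun i _ => ?_
  rw [map_mul, map_add]
  rcases lt_or_ge i D with hi | hi
  · rw [modXPow_qBinom_eq (l := n) (by omega) (by omega) (by omega) (by omega),
      modXPow_qBinom_eq (k := n - (i + 1)) (l := n) (by omega) (by omega) (by omega) (by omega)]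
    ring
  · rw [modXPow_X_pow (hi.trans (strictMono_triangular_natCast.id_le i))]
    simp

end ModXPow

theorem coeff_sum_range_X_pow_triangular {n d : ℕ} (hd : d < n) :
    coeff d (∑ i ∈ range n, (X : ℚ⟦X⟧) ^ triangular i) = coeff d triangularSeries := by
  simp only [map_sum, coeff_X_pow, triangularSeries, coeff_mk, triangular_natCast]
  by_cases h : ∃ m ∈ range (d + 1), m * (m + 1) / 2 = d
  · obtain ⟨m, hm, rfl⟩ := h
    rw [if_pos ⟨m, hm, rfl⟩, sum_eq_single m]
    · simp
    · intro i _ him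
      exact if_neg fun h => him (strictMono_triangular_natCast.injective
        (by simp only [triangular_natCast]; exact h.symm))
    · intro hm'
      exact absurd (mem_range.2 (by simp at hm; omega)) hm'
  · rw [if_neg h]
    refine sum_eq_zero fun i _ => if_neg ?_
    rintro rfl
    have := strictMono_triangular_natCast.id_le i
    rw [triangular_natCast] at this
    exact h ⟨i, mem_range.2 (Nat.lt_succ_of_le this), rfl⟩

theorem modXPow_sum_range_X_pow_triangular {D n : ℕ} (h : D ≤ n) :
    modXPow D (∑ i ∈ range n, (X : ℚ⟦X⟧) ^ triangular i) = modXPow D triangularSeries :=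
  modXPow_eq_modXPow_iff.2 fun _ hd => coeff_sum_range_X_pow_triangular (by omega)

theorem modXPow_qPochhammer_neg_X_sq {D N : ℕ} (hN : 2 * D ≤ N) :
    modXPow D (qPochhammer (-X : ℚ⟦X⟧) X N) * modXPow D (qPochhammer (-X) X N)
      = modXPow D (qBinom X (2 * (N + 1)) (N + 1 : ℕ)) * modXPow D triangularSeries := by
  have hnegX : (X : ℚ⟦X⟧) ∣ -X := dvd_neg.2 dvd_rfl
  have h2 : IsUnit (2 : ℚ⟦X⟧ ⧸ Ideal.span {(X : ℚ⟦X⟧) ^ D}) := by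
    simpa only [map_ofNat] using
      (isUnit_of_invertible (2 : ℚ)).map (algebraMap ℚ (ℚ⟦X⟧ ⧸ Ideal.span {(X : ℚ⟦X⟧) ^ D}))
  have hθ := modXPow_finiteTheta (K := ℚ) (D := D) (n := N + 1) (by omega)
  rw [finiteTheta_eq, qPochhammer_neg_one_succ, modXPow_sum_range_X_pow_triangular (by omega),
    map_mul, map_mul, map_ofNat, modXPow_qPochhammer hnegX dvd_rfl (show D ≤ N + 1 by omega),
    ← modXPow_qPochhammer hnegX dvd_rfl (show D ≤ N by omega), mul_assoc, mul_assoc] at hθ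
  exact h2.mul_left_cancel hθ

theorem modXPow_triangularSeries_mul_prodInf (D : ℕ) :
    modXPow D (triangularSeries * prodInf fun i => 1 - (X : ℚ⟦X⟧) ^ (2 * i + 1))
      = modXPow D (prodInf fun i => 1 - (X : ℚ⟦X⟧) ^ (2 * (i + 1))) := by
  set N := 2 * D
  have hX : (X : ℚ⟦X⟧) ∣ X ^ 2 := dvd_pow_self X two_ne_zero
  have hE : modXPow D (prodInf fun i => 1 - (X : ℚ⟦X⟧) ^ (2 * (i + 1)))
      = modXPow D (qPochhammer (X ^ 2) (X ^ 2) N) := by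
    rw [show (fun i => 1 - (X : ℚ⟦X⟧) ^ (2 * (i + 1))) = fun i => 1 - X ^ 2 * (X ^ 2) ^ i by
      funext i; ring]
    exact modXPow_prodInf_eq_qPochhammer hX hX (by omega)
  have hO : modXPow D (prodInf fun i => 1 - (X : ℚ⟦X⟧) ^ (2 * i + 1))
      = modXPow D (qPochhammer X (X ^ 2) N) := by
    rw [show (fun i => 1 - (X : ℚ⟦X⟧) ^ (2 * i + 1)) = fun i => 1 - X * (X ^ 2) ^ i by
      funext i; ring]
    exact modXPow_prodInf_eq_qPochhammer dvd_rfl hX (by omega)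
  have hF := modXPow_qPochhammer_neg_X_sq (le_refl N)
  have hb := modXPow_qBinom_mul_qPochhammer (K := ℚ) (m := 2 * (N + 1)) (k := N + 1)
    (D := D) (by omega) (by omega)
  rw [← modXPow_qPochhammer dvd_rfl dvd_rfl (show D ≤ N by omega)] at hb
  have hPF := congrArg (modXPow D) (qPochhammer_mul_qPochhammer_neg (X : ℚ⟦X⟧) N)
  have hEO := congrArg (modXPow D) (qPochhammer_sq_mul_qPochhammer (X : ℚ⟦X⟧) N)
  rw [map_mul] at hPF hEO
  rw [modXPow_qPochhammer dvd_rfl dvd_rfl (show D ≤ 2 * N by omega),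
    ← modXPow_qPochhammer dvd_rfl dvd_rfl (show D ≤ N by omega)] at hEO
  rw [map_mul, hE, hO]
  set t := modXPow D triangularSeries
  set O := modXPow D (qPochhammer (X : ℚ⟦X⟧) (X ^ 2) N)
  set P := modXPow D (qPochhammer (X : ℚ⟦X⟧) X N)
  set F := modXPow D (qPochhammer (-X : ℚ⟦X⟧) X N)
  linear_combination -(t * O) * hb - O * P * hF + (O * F + 1) * hPF + F * hEO

/-- Gauss's identity: `(q²;q²)_∞ / (q;q²)_∞ = Σ_{n=0}^∞ q^{n(n+1)/2}`. -/
theorem gauss_identity :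
    prodInf (fun i => 1 - (X : PowerSeries ℚ) ^ (2 * (i + 1))) *
        (prodInf (fun i => 1 - (X : PowerSeries ℚ) ^ (2 * i + 1)))⁻¹
      = triangularSeries := by
  have hO : constantCoeff (prodInf fun i => 1 - (X : ℚ⟦X⟧) ^ (2 * i + 1)) ≠ 0 := by
    rw [← coeff_zero_eq_constantCoeff_apply, prodInf, coeff_mk]
    simp
  rw [eq_comm, eq_mul_inv_iff_mul_eq hO]
  ext d
  exact modXPow_eq_modXPow_iff.1 (modXPow_triangularSeries_mul_prodInf (d + 1)) d (lt_add_one d)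
end

section
/- Double-sum rearrangement for S_{L7}: the two formal power series in z and q given by Σ_{n=0}^∞ Σ_{j=1}^∞ (1-z^j)(1-z^{j-1}) z^{1-j} (-1)^{j+1} (1+q^{2j-1}) q^{j(j-1) + n(n-1)/2 + 2jn} and Σ_{j=0}^∞ Σ_{n=-j}^{j} (1-z^{j-|n|+1})(1-z^{j-|n|}) z^{|n|-j} (-1)^{j+n} q^{j(j+1) - n(n-1)/2} are equal. -/
open PowerSeries Finset LaurentPolynomial

/-- The double sum
`Σ_{n=0}^∞ Σ_{j=1}^∞ (1-z^j)(1-z^{j-1}) z^{1-j} (-1)^{j+1} (1+q^{2j-1}) q^{j(j-1)+n(n-1)/2+2jn}`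
as a formal power series in `q` with Laurent-polynomial coefficients in `z`. -/
noncomputable def sL7DoubleSum : PowerSeries (LaurentPolynomial ℚ) :=
  PowerSeries.mk fun d =>
    ∑ j ∈ Finset.Icc 1 (d + 1), ∑ n ∈ Finset.range (d + 2),
      ((if j * (j - 1) + n * (n - 1) / 2 + 2 * j * n = d then
          (1 - T (j : ℤ)) * (1 - T ((j : ℤ) - 1)) * T (1 - (j : ℤ)) *
            LaurentPolynomial.C ((-1 : ℚ) ^ (j + 1)) else 0) +
        (if j * (j - 1) + n * (n - 1) / 2 + 2 * j * n + (2 * j - 1) = d then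
          (1 - T (j : ℤ)) * (1 - T ((j : ℤ) - 1)) * T (1 - (j : ℤ)) *
            LaurentPolynomial.C ((-1 : ℚ) ^ (j + 1)) else 0))

/-- The Hecke–Rogers style double sum
`Σ_{j=0}^∞ Σ_{n=-j}^{j} (1-z^{j-|n|+1})(1-z^{j-|n|}) z^{|n|-j} (-1)^{j+n} q^{j(j+1)-n(n-1)/2}`
as a formal power series in `q` with Laurent-polynomial coefficients in `z`. -/
noncomputable def sL7HeckeSum : PowerSeries (LaurentPolynomial ℚ) :=
  PowerSeries.mk fun d =>
    ∑ j ∈ Finset.range (d + 1), ∑ n ∈ Finset.Icc (-(j : ℤ)) (j : ℤ),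
      if (j : ℤ) * ((j : ℤ) + 1) - n * (n - 1) / 2 = (d : ℤ) then
        (1 - T ((j : ℤ) - |n| + 1)) * (1 - T ((j : ℤ) - |n|)) * T (|n| - (j : ℤ)) *
          LaurentPolynomial.C ((-1 : ℚ) ^ ((j : ℤ) + n))
      else 0

/-!
Both sides are, coefficientwise in `q`, finite sums of
`weight k = (1 - z^(k+1)) (1 - z^k) z^(-k) (-1)^k`.
The terms of the Hecke sum with `N ≥ 0` correspond to the `1` half of `(1 + q^(2j-1))` via
`(j, n) ↦ (J, N) = (j + n - 1, n)`, those with `N < 0` to the `q^(2j-1)` half via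
`(j, n) ↦ (j + n, -n - 1)`. Both maps preserve the exponent of `q` and send `j - 1` to `J - |N|`,
and the Hecke summand is `weight (J - |N|)` because `J + N ≡ J - |N| (mod 2)`.
-/

lemma neg_one_zpow_eq_of_even_sub {α : Type*} [DivisionMonoid α] [HasDistribNeg α] {a b : ℤ}
    (h : Even (a - b)) : (-1 : α) ^ a = (-1 : α) ^ b := by
  simp only [neg_one_zpow_eq_ite, Int.even_sub.mp h]

namespace SL7

noncomputable def weight (k : ℤ) : LaurentPolynomial ℚ :=
  (1 - T (k + 1)) * (1 - T k) * T (-k) * LaurentPolynomial.C ((-1 : ℚ) ^ k)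

def doubleSumExp (j n : ℕ) : ℕ := j * (j - 1) + n * (n - 1) / 2 + 2 * j * n

def heckeExp (J N : ℤ) : ℤ := J * (J + 1) - N * (N - 1) / 2

lemma weight_natCast_sub_one (j : ℕ) :
    weight (j - 1) = (1 - T (j : ℤ)) * (1 - T ((j : ℤ) - 1)) * T (1 - (j : ℤ)) *
      LaurentPolynomial.C ((-1 : ℚ) ^ (j + 1)) := by
  have hparity : Even (((j + 1 : ℕ) : ℤ) - (j - 1)) := ⟨1, by push_cast; ring⟩
  rw [weight, sub_add_cancel, neg_sub, ← zpow_natCast, neg_one_zpow_eq_of_even_sub hparity]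

lemma weight_sub_abs (J N : ℤ) :
    weight (J - |N|) = (1 - T (J - |N| + 1)) * (1 - T (J - |N|)) * T (|N| - J) *
      LaurentPolynomial.C ((-1 : ℚ) ^ (J + N)) := by
  have hparity : Even (J + N - (J - |N|)) := by
    rcases abs_choice N with h | h <;> rw [h]
    exacts [⟨N, by ring⟩, ⟨0, by ring⟩]
  rw [weight, neg_sub, neg_one_zpow_eq_of_even_sub hparity]

lemma natCast_doubleSumExp {j : ℕ} (n : ℕ) (hj : 1 ≤ j) :
    (doubleSumExp j n : ℤ) = j * (j - 1) + n * (n - 1) / 2 + 2 * j * n := by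
  have hn : ((n * (n - 1) : ℕ) : ℤ) = n * (n - 1) := by
    rcases n with _ | n
    · simp
    · push_cast [Nat.add_sub_cancel]; ring
  rw [doubleSumExp, Nat.cast_add, Nat.cast_add, Int.natCast_div, hn]
  push_cast [hj]
  ring

lemma heckeExp_add_sub_one (j n : ℤ) :
    heckeExp (j + n - 1) n = j * (j - 1) + n * (n - 1) / 2 + 2 * j * n := by
  obtain ⟨t, ht⟩ := Int.even_mul_pred_self n
  rw [heckeExp, ht, ← two_mul, Int.mul_ediv_cancel_left _ two_ne_zero]
  linear_combination ht

lemma heckeExp_add_neg_sub_one (j n : ℤ) :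
    heckeExp (j + n) (-n - 1) = j * (j - 1) + n * (n - 1) / 2 + 2 * j * n + (2 * j - 1) := by
  obtain ⟨t, ht⟩ := Int.even_mul_pred_self n
  have hshift : (-n - 1) * (-n - 1 - 1) = n * (n - 1) + (2 * n + 1) * 2 := by ring
  rw [heckeExp, hshift, Int.add_mul_ediv_right _ _ two_ne_zero, ht, ← two_mul,
    Int.mul_ediv_cancel_left _ two_ne_zero]
  linear_combination ht

lemma add_le_doubleSumExp_add_one {j : ℕ} (n : ℕ) (hj : 1 ≤ j) :
    j + n ≤ doubleSumExp j n + 1 := by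
  have h1 : j - 1 ≤ j * (j - 1) := Nat.le_mul_of_pos_left _ hj
  have h2 : n ≤ 2 * j * n := Nat.le_mul_of_pos_left _ (by omega)
  unfold doubleSumExp
  omega

lemma heckeExp_natCast_add_sub_one {j : ℕ} (n : ℕ) (hj : 1 ≤ j) :
    heckeExp ((j + n - 1 : ℕ) : ℤ) n = doubleSumExp j n := by
  rw [Nat.cast_sub (by omega), Nat.cast_add, Nat.cast_one, heckeExp_add_sub_one,
    natCast_doubleSumExp n hj]

lemma heckeExp_natCast_add_neg_sub_one {j : ℕ} (n : ℕ) (hj : 1 ≤ j) :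
    heckeExp ((j + n : ℕ) : ℤ) (-n - 1) = (doubleSumExp j n + (2 * j - 1) : ℕ) := by
  rw [Nat.cast_add, heckeExp_add_neg_sub_one, Nat.cast_add, natCast_doubleSumExp n hj,
    Nat.cast_sub (by omega)]
  push_cast
  ring

noncomputable def triangle (d : ℕ) : Finset ((_ : ℕ) × ℤ) :=
  (range (d + 1)).sigma fun J => Icc (-(J : ℤ)) J

lemma coeff_sL7DoubleSum (d : ℕ) :
    coeff d sL7DoubleSum =
      (∑ p ∈ Icc 1 (d + 1) ×ˢ range (d + 2) with doubleSumExp p.1 p.2 = d, weight (p.1 - 1)) +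
      ∑ p ∈ Icc 1 (d + 1) ×ˢ range (d + 2) with doubleSumExp p.1 p.2 + (2 * p.1 - 1) = d,
        weight (p.1 - 1) := by
  simp only [sL7DoubleSum, coeff_mk, ← weight_natCast_sub_one, sum_filter, ← sum_add_distrib,
    sum_product]
  rfl

lemma coeff_sL7HeckeSum (d : ℕ) :
    coeff d sL7HeckeSum = ∑ x ∈ triangle d with heckeExp x.1 x.2 = d, weight (x.1 - |x.2|) := by
  simp only [sL7HeckeSum, coeff_mk, ← weight_sub_abs, sum_filter, triangle, sum_sigma]
  rfl

lemma sum_doubleSumExp_eq_sum_heckeExp_nonneg (d : ℕ) :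
    ∑ p ∈ Icc 1 (d + 1) ×ˢ range (d + 2) with doubleSumExp p.1 p.2 = d, weight (p.1 - 1) =
      ∑ x ∈ triangle d with heckeExp x.1 x.2 = d ∧ 0 ≤ x.2, weight (x.1 - |x.2|) := by
  refine sum_bij' (fun p _ => ⟨p.1 + p.2 - 1, p.2⟩)
    (fun x _ => (x.1 - x.2.toNat + 1, x.2.toNat)) ?_ ?_ ?_ ?_ ?_
  · rintro ⟨j, n⟩ hp
    simp only [triangle, mem_filter, mem_product, mem_sigma, mem_Icc, mem_range] at hp ⊢
    obtain ⟨⟨⟨hj, -⟩, -⟩, hd⟩ := hp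
    have := add_le_doubleSumExp_add_one n hj
    refine ⟨⟨by omega, by omega, by omega⟩, ?_, by omega⟩
    rw [heckeExp_natCast_add_sub_one n hj, hd]
  · rintro ⟨J, N⟩ hx
    simp only [triangle, mem_filter, mem_product, mem_sigma, mem_Icc, mem_range] at hx ⊢
    obtain ⟨⟨hJ, -, hNJ⟩, hd, hN⟩ := hx
    lift N to ℕ using hN
    rw [Int.toNat_natCast]
    refine ⟨⟨⟨by omega, by omega⟩, by omega⟩, ?_⟩
    rw [show J = J - N + 1 + N - 1 by omega, heckeExp_natCast_add_sub_one N (by omega)] at hd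
    exact_mod_cast hd
  · rintro ⟨j, n⟩ hp
    simp only [mem_filter, mem_product, mem_Icc] at hp
    simp only [Int.toNat_natCast, Prod.mk.injEq, and_true]
    omega
  · rintro ⟨J, N⟩ hx
    simp only [triangle, mem_filter, mem_sigma, mem_Icc, mem_range] at hx
    simp only [Sigma.mk.injEq, heq_eq_eq]
    omega
  · rintro ⟨j, n⟩ hp
    simp only [mem_filter, mem_product, mem_Icc] at hp
    dsimp only
    rw [Int.abs_natCast]
    congr 1
    omega

lemma sum_doubleSumExp_eq_sum_heckeExp_neg (d : ℕ) :
    ∑ p ∈ Icc 1 (d + 1) ×ˢ range (d + 2) with doubleSumExp p.1 p.2 + (2 * p.1 - 1) = d,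
        weight (p.1 - 1) =
      ∑ x ∈ triangle d with heckeExp x.1 x.2 = d ∧ ¬0 ≤ x.2, weight (x.1 - |x.2|) := by
  refine sum_bij' (fun p _ => ⟨p.1 + p.2, -p.2 - 1⟩)
    (fun x _ => (x.1 - (-x.2 - 1).toNat, (-x.2 - 1).toNat)) ?_ ?_ ?_ ?_ ?_
  · rintro ⟨j, n⟩ hp
    simp only [triangle, mem_filter, mem_product, mem_sigma, mem_Icc, mem_range] at hp ⊢
    obtain ⟨⟨⟨hj, -⟩, -⟩, hd⟩ := hp
    have := add_le_doubleSumExp_add_one n hj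
    refine ⟨⟨by omega, by omega, by omega⟩, ?_, by omega⟩
    rw [heckeExp_natCast_add_neg_sub_one n hj, hd]
  · rintro ⟨J, N⟩ hx
    simp only [triangle, mem_filter, mem_product, mem_sigma, mem_Icc, mem_range] at hx ⊢
    obtain ⟨⟨hJ, hJN, -⟩, hd, hN⟩ := hx
    obtain ⟨n, rfl⟩ : ∃ n : ℕ, N = -n - 1 := ⟨(-N - 1).toNat, by omega⟩
    rw [show (-(-(n : ℤ) - 1) - 1).toNat = n by omega]
    refine ⟨⟨⟨by omega, by omega⟩, by omega⟩, ?_⟩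
    rw [show J = J - n + n by omega, heckeExp_natCast_add_neg_sub_one n (by omega)] at hd
    exact_mod_cast hd
  · rintro ⟨j, n⟩ -
    simp only [Prod.mk.injEq]
    omega
  · rintro ⟨J, N⟩ hx
    simp only [triangle, mem_filter, mem_sigma, mem_Icc, mem_range] at hx
    simp only [Sigma.mk.injEq, heq_eq_eq]
    omega
  · rintro ⟨j, n⟩ hp
    simp only [mem_filter, mem_product, mem_Icc] at hp
    dsimp only
    rw [abs_of_neg (by omega)]
    congr 1
    omega

end SL7

/-- Double-sum rearrangement for `S_{L7}`: the two double series are equal as formal power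
series in `q` with Laurent-polynomial coefficients in `z`. -/
theorem sL7_double_sum_rearrangement : sL7DoubleSum = sL7HeckeSum := by
  ext d
  rw [SL7.coeff_sL7DoubleSum, SL7.coeff_sL7HeckeSum, SL7.sum_doubleSumExp_eq_sum_heckeExp_nonneg,
    SL7.sum_doubleSumExp_eq_sum_heckeExp_neg, ← filter_filter, ← filter_filter,
    sum_filter_add_sum_filter_not]
end
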